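/- arXiv:1205.6866 — 4 statements merged into one kernel-verified Lean document; each statement's English description precedes it below -/
import Mathlib

section
/- Let A be a ring with involution, λ central with λλ̄ = 1, Λ a form parameter, and let I, J be involution-invariant two-sided ideals of A with relative form parameters Γ (of level I) and Δ (of level J). Then the symmetrised product (I∘J, Γ∘Δ), where I∘J = IJ + JI and Γ∘Δ = Γ_min(IJ+JI) + ⟨ξΓξ̄ : ξ ∈ J⟩ + ⟨ξΔξ̄ : ξ ∈ I⟩, is again a form ideal: Γ∘Δ is an additive subgroup of I∘J with Γ_min(I∘J) ⊆ Γ∘Δ ⊆ Γ_max(I∘J) and a(Γ∘Δ)ā ⊆ Γ∘Δ for all a ∈ A. -/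
/-- The minimal relative form parameter `Γ_min(I)` of level `I`:
the additive subgroup generated by `{ξ - l·bar ξ : ξ ∈ I}` and
`{ξ·α·bar ξ : ξ ∈ I, α ∈ Λ}`. -/
def GammaMin {A : Type*} [Ring A] (bar : A → A) (l : A) (Λ : AddSubgroup A)
    (I : TwoSidedIdeal A) : AddSubgroup A :=
  AddSubgroup.closure
    ({x : A | ∃ ξ ∈ I, x = ξ - l * bar ξ} ∪
     {x : A | ∃ ξ ∈ I, ∃ α ∈ Λ, x = ξ * α * bar ξ})

/-- The symmetrised product `I∘J = IJ + JI` of two-sided ideals. -/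
def symmProd {A : Type*} [Ring A] (I J : TwoSidedIdeal A) : TwoSidedIdeal A :=
  TwoSidedIdeal.span {x : A | ∃ a ∈ I, ∃ b ∈ J, x = a * b ∨ x = b * a}

/-- The symmetrised product `Γ∘Δ = Γ_min(I∘J) + ᴶΓ + ᴵΔ` of relative form parameters. -/
def symmProdGamma {A : Type*} [Ring A] (bar : A → A) (l : A) (Λ : AddSubgroup A)
    (I J : TwoSidedIdeal A) (Γ Δ : AddSubgroup A) : AddSubgroup A :=
  GammaMin bar l Λ (symmProd I J) ⊔
    AddSubgroup.closure {x : A | ∃ ξ ∈ J, ∃ γ ∈ Γ, x = ξ * γ * bar ξ} ⊔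
    AddSubgroup.closure {x : A | ∃ ξ ∈ I, ∃ δ ∈ Δ, x = ξ * δ * bar ξ}

/-- The symmetrised product `(I∘J, Γ∘Δ)` of two form ideals is again a form ideal. -/
theorem symmProd_is_form_ideal {A : Type*} [Ring A]
    (bar : A → A)
    (hadd : ∀ x y : A, bar (x + y) = bar x + bar y)
    (hmul : ∀ x y : A, bar (x * y) = bar y * bar x)
    (hinv : ∀ x : A, bar (bar x) = x)
    (l : A) (hcent : ∀ a : A, l * a = a * l) (hl : l * bar l = 1)
    (Λ : AddSubgroup A)
    (hΛmin : {x : A | ∃ α : A, x = α - l * bar α} ⊆ (Λ : Set A))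
    (hΛmax : (Λ : Set A) ⊆ {x : A | x = -(l * bar x)})
    (hΛcl : ∀ a : A, ∀ ξ ∈ Λ, a * ξ * bar a ∈ Λ)
    (I J : TwoSidedIdeal A)
    (hIbar : ∀ x ∈ I, bar x ∈ I) (hJbar : ∀ x ∈ J, bar x ∈ J)
    (Γ Δ : AddSubgroup A)
    (hΓ₁ : GammaMin bar l Λ I ≤ Γ) (hΓ₂ : ∀ x ∈ Γ, x ∈ I ∧ x ∈ Λ)
    (hΓ₃ : ∀ a : A, ∀ ξ ∈ Γ, a * ξ * bar a ∈ Γ)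
    (hΔ₁ : GammaMin bar l Λ J ≤ Δ) (hΔ₂ : ∀ x ∈ Δ, x ∈ J ∧ x ∈ Λ)
    (hΔ₃ : ∀ a : A, ∀ ξ ∈ Δ, a * ξ * bar a ∈ Δ) :
    (∀ x ∈ symmProdGamma bar l Λ I J Γ Δ, x ∈ symmProd I J) ∧
    (GammaMin bar l Λ (symmProd I J) ≤ symmProdGamma bar l Λ I J Γ Δ) ∧
    (∀ x ∈ symmProdGamma bar l Λ I J Γ Δ, x ∈ symmProd I J ∧ x ∈ Λ) ∧
    (∀ a : A, ∀ ξ ∈ symmProdGamma bar l Λ I J Γ Δ,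
      a * ξ * bar a ∈ symmProdGamma bar l Λ I J Γ Δ) := by
  have hbar0 : bar 0 = 0 := by
    have h := hadd 0 0
    rw [add_zero] at h
    exact left_eq_add.mp h
  set K := symmProd I J with hKdef
  -- the generators of K belong to K
  have hgen : ∀ a ∈ I, ∀ b ∈ J, a * b ∈ K ∧ b * a ∈ K := by
    intro a ha b hb
    constructor
    · exact TwoSidedIdeal.subset_span ⟨a, ha, b, hb, Or.inl rfl⟩
    · exact TwoSidedIdeal.subset_span ⟨a, ha, b, hb, Or.inr rfl⟩
  -- K is invariant under bar
  have hKbar : ∀ x ∈ K, bar x ∈ K := by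
    intro x hx
    let L : TwoSidedIdeal A := TwoSidedIdeal.mk' {y : A | bar y ∈ K}
      (show bar 0 ∈ K by rw [hbar0]; exact K.zero_mem)
      (fun {x y} hx hy => show bar (x + y) ∈ K by rw [hadd]; exact K.add_mem hx hy)
      (fun {x} hx => show bar (-x) ∈ K by
        have h : bar x + bar (-x) = 0 := by
          rw [← hadd]; simp [hbar0]
        rw [eq_neg_of_add_eq_zero_right h]
        exact K.neg_mem hx)
      (fun {x y} hy => show bar (x * y) ∈ K by
        rw [hmul]; exact K.mul_mem_right _ _ hy)
      (fun {x y} hx => show bar (x * y) ∈ K by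
        rw [hmul]; exact K.mul_mem_left _ _ hx)
    have hxL : x ∈ L := by
      refine TwoSidedIdeal.mem_span_iff.mp hx L ?_
      rintro z ⟨a, ha, b, hb, (rfl | rfl)⟩ <;>
        rw [SetLike.mem_coe, TwoSidedIdeal.mem_mk']
      · show bar (a * b) ∈ K
        rw [hmul]; exact (hgen _ (hIbar a ha) _ (hJbar b hb)).2
      · show bar (b * a) ∈ K
        rw [hmul]; exact (hgen _ (hIbar a ha) _ (hJbar b hb)).1
    rwa [TwoSidedIdeal.mem_mk'] at hxL
  -- the three generating sets
  set T1 : Set A := {x : A | ∃ ξ ∈ K, x = ξ - l * bar ξ} with hT1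
  set T2 : Set A := {x : A | ∃ ξ ∈ K, ∃ α ∈ Λ, x = ξ * α * bar ξ} with hT2
  set S2 : Set A := {x : A | ∃ ξ ∈ J, ∃ γ ∈ Γ, x = ξ * γ * bar ξ} with hS2
  set S3 : Set A := {x : A | ∃ ξ ∈ I, ∃ δ ∈ Δ, x = ξ * δ * bar ξ} with hS3
  have hGD : symmProdGamma bar l Λ I J Γ Δ =
      AddSubgroup.closure (((T1 ∪ T2) ∪ S2) ∪ S3) := by
    rw [symmProdGamma, AddSubgroup.closure_union, AddSubgroup.closure_union]
    rfl
  -- every generator is in K and in Λ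
  have hgenKΛ : ∀ x ∈ ((T1 ∪ T2) ∪ S2) ∪ S3, x ∈ K ∧ x ∈ Λ := by
    rintro x (((⟨ξ, hξ, rfl⟩ | ⟨ξ, hξ, α, hα, rfl⟩) | ⟨ξ, hξ, γ, hγ, rfl⟩) | ⟨ξ, hξ, δ, hδ, rfl⟩)
    · exact ⟨K.sub_mem hξ (K.mul_mem_left _ _ (hKbar _ hξ)), hΛmin ⟨ξ, rfl⟩⟩
    · exact ⟨K.mul_mem_right _ _ (K.mul_mem_right _ _ hξ), hΛcl ξ α hα⟩
    · refine ⟨K.mul_mem_right _ _ (hgen _ (hΓ₂ γ hγ).1 _ hξ).2, hΛcl ξ γ (hΓ₂ γ hγ).2⟩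
    · refine ⟨K.mul_mem_right _ _ (hgen _ hξ _ (hΔ₂ δ hδ).1).1, hΛcl ξ δ (hΔ₂ δ hδ).2⟩
  -- the subgroup of elements of K ∩ Λ
  have hKΛ : ∀ x ∈ symmProdGamma bar l Λ I J Γ Δ, x ∈ K ∧ x ∈ Λ := by
    intro x hx
    rw [hGD] at hx
    refine AddSubgroup.closure_induction (fun y hy => hgenKΛ y hy)
      ⟨K.zero_mem, Λ.zero_mem⟩
      (fun y z _ _ hy hz => ⟨K.add_mem hy.1 hz.1, Λ.add_mem hy.2 hz.2⟩)
      (fun y _ hy => ⟨K.neg_mem hy.1, Λ.neg_mem hy.2⟩) hx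
  refine ⟨fun x hx => (hKΛ x hx).1, ?_, hKΛ, ?_⟩
  · -- GammaMin K ≤ symmProdGamma
    exact le_sup_of_le_left le_sup_left
  · -- closure under a ∙ - ∙ bar a
    intro a ξ hξ
    rw [hGD] at hξ ⊢
    have hc : ∀ x : A, a * (l * x) = l * (a * x) := fun x => by
      rw [← mul_assoc, ← hcent, mul_assoc]
    have hbarbar : ∀ x : A, bar (a * x * bar a) = a * bar x * bar a := fun x => by
      rw [hmul, hmul, hinv, mul_assoc]
    refine AddSubgroup.closure_induction (p := fun y _ =>
        a * y * bar a ∈ AddSubgroup.closure (((T1 ∪ T2) ∪ S2) ∪ S3)) ?_ ?_ ?_ ?_ hξ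
    · rintro x (((⟨ξ, hξ', rfl⟩ | ⟨ξ, hξ', α, hα, rfl⟩) | ⟨ξ, hξ', γ, hγ, rfl⟩) |
        ⟨ξ, hξ', δ, hδ, rfl⟩)
      · -- T1 generator
        have key : a * (ξ - l * bar ξ) * bar a =
            (a * ξ * bar a) - l * bar (a * ξ * bar a) := by
          rw [hbarbar, mul_sub, hc, sub_mul, mul_assoc l]
        rw [key]
        exact AddSubgroup.subset_closure (Or.inl (Or.inl (Or.inl
          ⟨a * ξ * bar a, K.mul_mem_right _ _ (K.mul_mem_left _ _ hξ'), rfl⟩)))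
      · -- T2 generator
        have key : a * (ξ * α * bar ξ) * bar a = (a * ξ) * α * bar (a * ξ) := by
          rw [hmul]; simp only [mul_assoc]
        rw [key]
        exact AddSubgroup.subset_closure (Or.inl (Or.inl (Or.inr
          ⟨a * ξ, K.mul_mem_left _ _ hξ', α, hα, rfl⟩)))
      · -- S2 generator
        have key : a * (ξ * γ * bar ξ) * bar a = (a * ξ) * γ * bar (a * ξ) := by
          rw [hmul]; simp only [mul_assoc]
        rw [key]
        exact AddSubgroup.subset_closure (Or.inl (Or.inr
          ⟨a * ξ, J.mul_mem_left _ _ hξ', γ, hγ, rfl⟩))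
      · -- S3 generator
        have key : a * (ξ * δ * bar ξ) * bar a = (a * ξ) * δ * bar (a * ξ) := by
          rw [hmul]; simp only [mul_assoc]
        rw [key]
        exact AddSubgroup.subset_closure (Or.inr
          ⟨a * ξ, I.mul_mem_left _ _ hξ', δ, hδ, rfl⟩)
    · simpa using AddSubgroup.zero_mem _
    · intro x y _ _ hx hy
      have : a * (x + y) * bar a = a * x * bar a + a * y * bar a := by
        rw [mul_add, add_mul]
      rw [this]; exact AddSubgroup.add_mem _ hx hy
    · intro x _ hx
      have : a * (-x) * bar a = -(a * x * bar a) := by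
        rw [mul_neg, neg_mul]
      rw [this]; exact AddSubgroup.neg_mem _ hx
end

section
/- Let G be a group and suppose to each two-sided ideal I of a ring A we associate subgroups E(I) ≤ G(I) of G satisfying: (M1) monotonicity: I ⊆ J implies E(I) ⊆ E(J) and G(I) ⊆ G(J); (M2) [E(I), G(J)] = [E(I), E(J)]; (M3) [[E(I),G(J)],G(K)] = [[E(I),E(J)],E(K)]; (M4) E(I∘J) ⊆ [E(I),E(J)] ⊆ [E(I),G(J)] ⊆ [G(I),G(J)] ⊆ G(I∘J), where I∘J = IJ + JI. Then for any ideals I₀, …, I_m the left-normed multiple commutator satisfies [E(I₀), G(I₁), G(I₂), …, G(I_m)] = [E(I₀), E(I₁), E(I₂), …, E(I_m)]. -/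
/-- The left-normed multiple commutator `[f 0, f 1, …, f m]` of subgroups. -/
def leftNormedComm {G : Type*} [Group G] (f : ℕ → Subgroup G) : ℕ → Subgroup G
  | 0 => f 0
  | m + 1 => ⁅leftNormedComm f m, f (m + 1)⁆

/-- Iterated symmetrised products `P 0 = I₀`, `P (m+1) = P m ∘ I_{m+1}`. -/
def Pseq {A : Type*} [Ring A] (Is : ℕ → TwoSidedIdeal A) : ℕ → TwoSidedIdeal A
  | 0 => Is 0
  | m + 1 => symmProd (Pseq Is m) (Is (m + 1))

/-- Sandwich lemma: `E(Pₘ) ≤ Rₘ ≤ Gc(Pₘ)`. -/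
theorem sandwich_lemma {A G : Type*} [Ring A] [Group G]
    (E Gc : TwoSidedIdeal A → Subgroup G)
    (hEG : ∀ I, E I ≤ Gc I)
    (M2 : ∀ I J, ⁅E I, Gc J⁆ = ⁅E I, E J⁆)
    (M4 : ∀ I J, E (symmProd I J) ≤ ⁅E I, E J⁆ ∧ ⁅E I, E J⁆ ≤ ⁅E I, Gc J⁆ ∧
      ⁅E I, Gc J⁆ ≤ ⁅Gc I, Gc J⁆ ∧ ⁅Gc I, Gc J⁆ ≤ Gc (symmProd I J))
    (Is : ℕ → TwoSidedIdeal A) (m : ℕ) :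
    E (Pseq Is m) ≤ leftNormedComm (fun i => E (Is i)) m ∧
      leftNormedComm (fun i => E (Is i)) m ≤ Gc (Pseq Is m) := by
  induction m with
  | zero => exact ⟨le_rfl, hEG _⟩
  | succ m ih =>
    constructor
    · calc E (Pseq Is (m + 1)) ≤ ⁅E (Pseq Is m), E (Is (m + 1))⁆ := (M4 _ _).1
        _ ≤ ⁅leftNormedComm (fun i => E (Is i)) m, E (Is (m + 1))⁆ :=
          Subgroup.commutator_mono ih.1 le_rfl
        _ = leftNormedComm (fun i => E (Is i)) (m + 1) := rfl
    · calc leftNormedComm (fun i => E (Is i)) (m + 1)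
          = ⁅leftNormedComm (fun i => E (Is i)) m, E (Is (m + 1))⁆ := rfl
        _ ≤ ⁅Gc (Pseq Is m), E (Is (m + 1))⁆ := Subgroup.commutator_mono ih.2 le_rfl
        _ ≤ ⁅Gc (Pseq Is m), Gc (Is (m + 1))⁆ :=
          Subgroup.commutator_mono le_rfl (hEG _)
        _ ≤ Gc (Pseq Is (m + 1)) := (M4 _ _).2.2.2

/-- `R_{m+1} = ⁅E(Pₘ), E(I_{m+1})⁆`. -/
theorem Req_lemma {A G : Type*} [Ring A] [Group G]
    (E Gc : TwoSidedIdeal A → Subgroup G)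
    (hEG : ∀ I, E I ≤ Gc I)
    (M2 : ∀ I J, ⁅E I, Gc J⁆ = ⁅E I, E J⁆)
    (M4 : ∀ I J, E (symmProd I J) ≤ ⁅E I, E J⁆ ∧ ⁅E I, E J⁆ ≤ ⁅E I, Gc J⁆ ∧
      ⁅E I, Gc J⁆ ≤ ⁅Gc I, Gc J⁆ ∧ ⁅Gc I, Gc J⁆ ≤ Gc (symmProd I J))
    (Is : ℕ → TwoSidedIdeal A) (m : ℕ) :
    leftNormedComm (fun i => E (Is i)) (m + 1) = ⁅E (Pseq Is m), E (Is (m + 1))⁆ := by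
  obtain ⟨h1, h2⟩ := sandwich_lemma E Gc hEG M2 M4 Is m
  apply le_antisymm
  · calc leftNormedComm (fun i => E (Is i)) (m + 1)
        = ⁅leftNormedComm (fun i => E (Is i)) m, E (Is (m + 1))⁆ := rfl
      _ ≤ ⁅Gc (Pseq Is m), E (Is (m + 1))⁆ := Subgroup.commutator_mono h2 le_rfl
      _ = ⁅E (Is (m + 1)), Gc (Pseq Is m)⁆ := Subgroup.commutator_comm _ _
      _ = ⁅E (Is (m + 1)), E (Pseq Is m)⁆ := M2 _ _
      _ = ⁅E (Pseq Is m), E (Is (m + 1))⁆ := Subgroup.commutator_comm _ _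
  · exact Subgroup.commutator_mono h1 le_rfl

/-- The multiple commutator formula
`[E(I₀), G(I₁), …, G(I_m)] = [E(I₀), E(I₁), …, E(I_m)]`
for subgroup-valued functions satisfying axioms (M1)–(M4). -/
theorem multiple_commutator_formula {A G : Type*} [Ring A] [Group G]
    (E Gc : TwoSidedIdeal A → Subgroup G)
    (hEG : ∀ I, E I ≤ Gc I)
    (hnorm : ∀ I, ∀ g ∈ Gc I, ∀ x ∈ E I, g * x * g⁻¹ ∈ E I)
    (M1 : ∀ I J : TwoSidedIdeal A, I ≤ J → E I ≤ E J ∧ Gc I ≤ Gc J)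
    (M2 : ∀ I J, ⁅E I, Gc J⁆ = ⁅E I, E J⁆)
    (M3 : ∀ I J K, ⁅⁅E I, Gc J⁆, Gc K⁆ = ⁅⁅E I, E J⁆, E K⁆)
    (M4 : ∀ I J, E (symmProd I J) ≤ ⁅E I, E J⁆ ∧ ⁅E I, E J⁆ ≤ ⁅E I, Gc J⁆ ∧
      ⁅E I, Gc J⁆ ≤ ⁅Gc I, Gc J⁆ ∧ ⁅Gc I, Gc J⁆ ≤ Gc (symmProd I J))
    (Is : ℕ → TwoSidedIdeal A) (m : ℕ) :
    leftNormedComm (fun i => if i = 0 then E (Is 0) else Gc (Is i)) m =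
      leftNormedComm (fun i => E (Is i)) m := by
  set f := fun i => if i = 0 then E (Is 0) else Gc (Is i) with hf
  induction m with
  | zero => simp [leftNormedComm, hf]
  | succ m ih =>
    have hfm : f (m + 1) = Gc (Is (m + 1)) := by simp [hf]
    show ⁅leftNormedComm f m, f (m + 1)⁆ = ⁅leftNormedComm (fun i => E (Is i)) m, E (Is (m + 1))⁆
    rw [ih, hfm]
    match m with
    | 0 =>
      show ⁅E (Is 0), Gc (Is 1)⁆ = ⁅E (Is 0), E (Is 1)⁆
      exact M2 _ _
    | m' + 1 =>
      rw [Req_lemma E Gc hEG M2 M4 Is m', ← M2 (Pseq Is m') (Is (m' + 1)), M3,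
        M2 (Pseq Is m') (Is (m' + 1)), ← Req_lemma E Gc hEG M2 M4 Is m']
end

section
/- Under axioms (M1)–(M4) for subgroup-valued functions E(·) ≤ G(·) on ideals of a ring A, if E(I_i) ⊆ G_i ⊆ G(I_i) for i = 0, …, m and for some index j one has G_j = E(I_j), then the left-normed multiple commutator satisfies [G₀, G₁, …, G_m] = [E(I₀), E(I₁), …, E(I_m)]. -/
/-- Iterated left-normed symmetrised product `I₀ ∘ I₁ ∘ ⋯ ∘ I_k`. -/
def iterSymm {A : Type*} [Ring A] (Is : ℕ → TwoSidedIdeal A) : ℕ → TwoSidedIdeal A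
  | 0 => Is 0
  | k + 1 => symmProd (iterSymm Is k) (Is (k + 1))

/-- If `E(I_i) ⊆ G_i ⊆ G(I_i)` and some `G_j` equals `E(I_j)`, then
`[G₀, G₁, …, G_m] = [E(I₀), E(I₁), …, E(I_m)]`, under axioms (M1)–(M4). -/
theorem multiple_commutator_formula_general {A G : Type*} [Ring A] [Group G]
    (E Gc : TwoSidedIdeal A → Subgroup G)
    (hEG : ∀ I, E I ≤ Gc I)
    (hnorm : ∀ I, ∀ g ∈ Gc I, ∀ x ∈ E I, g * x * g⁻¹ ∈ E I)
    (M1 : ∀ I J : TwoSidedIdeal A, I ≤ J → E I ≤ E J ∧ Gc I ≤ Gc J)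
    (M2 : ∀ I J, ⁅E I, Gc J⁆ = ⁅E I, E J⁆)
    (M3 : ∀ I J K, ⁅⁅E I, Gc J⁆, Gc K⁆ = ⁅⁅E I, E J⁆, E K⁆)
    (M4 : ∀ I J, E (symmProd I J) ≤ ⁅E I, E J⁆ ∧ ⁅E I, E J⁆ ≤ ⁅E I, Gc J⁆ ∧
      ⁅E I, Gc J⁆ ≤ ⁅Gc I, Gc J⁆ ∧ ⁅Gc I, Gc J⁆ ≤ Gc (symmProd I J))
    (Is : ℕ → TwoSidedIdeal A) (m : ℕ)
    (Gs : ℕ → Subgroup G)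
    (hlow : ∀ i ≤ m, E (Is i) ≤ Gs i) (hhigh : ∀ i ≤ m, Gs i ≤ Gc (Is i))
    (hj : ∃ j ≤ m, Gs j = E (Is j)) :
    leftNormedComm Gs m = leftNormedComm (fun i => E (Is i)) m := by
  obtain ⟨j, hjm, hGsj⟩ := hj
  set LE := leftNormedComm (fun i => E (Is i)) with hLE
  set S := iterSymm Is with hSdef
  have hstepE : ∀ k, LE (k + 1) = ⁅LE k, E (Is (k + 1))⁆ := fun k => rfl
  have hstepG : ∀ k, leftNormedComm Gs (k + 1) = ⁅leftNormedComm Gs k, Gs (k + 1)⁆ :=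
    fun k => rfl
  have hstepS : ∀ k, S (k + 1) = symmProd (S k) (Is (k + 1)) := fun k => rfl
  -- lower sandwich: E(S k) ≤ LE k
  have lowE : ∀ k, E (S k) ≤ LE k := by
    intro k
    induction k with
    | zero => exact le_rfl
    | succ k ih =>
      calc E (S (k + 1)) ≤ ⁅E (S k), E (Is (k + 1))⁆ := (M4 _ _).1
        _ ≤ ⁅LE k, E (Is (k + 1))⁆ := Subgroup.commutator_mono ih le_rfl
        _ = LE (k + 1) := (hstepE k).symm
  -- upper sandwich: LE k ≤ Gc(S k)
  have upE : ∀ k, LE k ≤ Gc (S k) := by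
    intro k
    induction k with
    | zero => exact hEG (Is 0)
    | succ k ih =>
      calc LE (k + 1) = ⁅LE k, E (Is (k + 1))⁆ := hstepE k
        _ ≤ ⁅Gc (S k), Gc (Is (k + 1))⁆ :=
          Subgroup.commutator_mono ih (hEG _)
        _ ≤ Gc (S (k + 1)) := (M4 _ _).2.2.2
  -- upper sandwich for Gs
  have upG : ∀ k ≤ m, leftNormedComm Gs k ≤ Gc (S k) := by
    intro k
    induction k with
    | zero => exact fun _ => hhigh 0 (Nat.zero_le m)
    | succ k ih =>
      intro hkm
      calc leftNormedComm Gs (k + 1) = ⁅leftNormedComm Gs k, Gs (k + 1)⁆ := hstepG k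
        _ ≤ ⁅Gc (S k), Gc (Is (k + 1))⁆ :=
          Subgroup.commutator_mono (ih (Nat.le_of_succ_le hkm)) (hhigh _ hkm)
        _ ≤ Gc (S (k + 1)) := (M4 _ _).2.2.2
  -- key identity: LE (k+1) = ⁅E (S k), E (Is (k+1))⁆
  have keyX : ∀ k, LE (k + 1) = ⁅E (S k), E (Is (k + 1))⁆ := by
    intro k
    refine le_antisymm ?_ ?_
    · calc LE (k + 1) = ⁅LE k, E (Is (k + 1))⁆ := hstepE k
        _ ≤ ⁅Gc (S k), E (Is (k + 1))⁆ := Subgroup.commutator_mono (upE k) le_rfl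
        _ = ⁅E (Is (k + 1)), Gc (S k)⁆ := Subgroup.commutator_comm _ _
        _ = ⁅E (Is (k + 1)), E (S k)⁆ := M2 _ _
        _ = ⁅E (S k), E (Is (k + 1))⁆ := Subgroup.commutator_comm _ _
    · calc ⁅E (S k), E (Is (k + 1))⁆ ≤ ⁅LE k, E (Is (k + 1))⁆ :=
          Subgroup.commutator_mono (lowE k) le_rfl
        _ = LE (k + 1) := (hstepE k).symm
  -- absorption: ⁅LE k, Gc K⁆ = ⁅LE k, E K⁆
  have keyY : ∀ k K, ⁅LE k, Gc K⁆ = ⁅LE k, E K⁆ := by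
    intro k K
    cases k with
    | zero => exact M2 (Is 0) K
    | succ k =>
      rw [keyX k]
      refine le_antisymm ?_ (Subgroup.commutator_mono le_rfl (hEG K))
      calc ⁅⁅E (S k), E (Is (k + 1))⁆, Gc K⁆
          ≤ ⁅⁅E (S k), Gc (Is (k + 1))⁆, Gc K⁆ :=
            Subgroup.commutator_mono (Subgroup.commutator_mono le_rfl (hEG _)) le_rfl
        _ = ⁅⁅E (S k), E (Is (k + 1))⁆, E K⁆ := M3 _ _ _
  -- main ≤ direction
  have mainLe : ∀ k, j ≤ k → k ≤ m → leftNormedComm Gs k ≤ LE k := by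
    intro k
    induction k with
    | zero =>
      intro hj0 _
      have : j = 0 := Nat.le_zero.mp hj0
      subst this
      exact le_of_eq hGsj
    | succ k ih =>
      intro hjk hkm
      rcases Nat.lt_or_ge j (k + 1) with hlt | hge
      · -- j ≤ k : use induction hypothesis and absorption
        calc leftNormedComm Gs (k + 1) = ⁅leftNormedComm Gs k, Gs (k + 1)⁆ := hstepG k
          _ ≤ ⁅LE k, Gc (Is (k + 1))⁆ :=
            Subgroup.commutator_mono (ih (Nat.lt_succ_iff.mp hlt) (Nat.le_of_succ_le hkm))
              (hhigh _ hkm)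
          _ = ⁅LE k, E (Is (k + 1))⁆ := keyY k _
          _ = LE (k + 1) := (hstepE k).symm
      · -- j = k + 1
        have hj' : j = k + 1 := le_antisymm hjk hge
        subst hj'
        calc leftNormedComm Gs (k + 1) = ⁅leftNormedComm Gs k, Gs (k + 1)⁆ := hstepG k
          _ = ⁅leftNormedComm Gs k, E (Is (k + 1))⁆ := by rw [hGsj]
          _ ≤ ⁅Gc (S k), E (Is (k + 1))⁆ :=
            Subgroup.commutator_mono (upG k (Nat.le_of_succ_le hkm)) le_rfl
          _ = ⁅E (Is (k + 1)), Gc (S k)⁆ := Subgroup.commutator_comm _ _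
          _ = ⁅E (Is (k + 1)), E (S k)⁆ := M2 _ _
          _ = ⁅E (S k), E (Is (k + 1))⁆ := Subgroup.commutator_comm _ _
          _ ≤ ⁅LE k, E (Is (k + 1))⁆ := Subgroup.commutator_mono (lowE k) le_rfl
          _ = LE (k + 1) := (hstepE k).symm
  -- main ≥ direction: monotonicity
  have mainGe : ∀ k ≤ m, LE k ≤ leftNormedComm Gs k := by
    intro k
    induction k with
    | zero => exact fun _ => hlow 0 (Nat.zero_le m)
    | succ k ih =>
      intro hkm
      calc LE (k + 1) = ⁅LE k, E (Is (k + 1))⁆ := hstepE k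
        _ ≤ ⁅leftNormedComm Gs k, Gs (k + 1)⁆ :=
          Subgroup.commutator_mono (ih (Nat.le_of_succ_le hkm)) (hlow _ hkm)
        _ = leftNormedComm Gs (k + 1) := (hstepG k).symm
  exact le_antisymm (mainLe m hjm le_rfl) (mainGe m le_rfl)
end

section
/- Under axioms (M1)–(M4), for ideals I₀, …, I_m of A and any index 0 ≤ k ≤ m−1, and any bracketing of the inner multi-commutators, one has [⟦E(I₀),…,E(I_k)⟧, ⟦E(I_{k+1}),…,E(I_m)⟧] = [E(I₀∘⋯∘I_k), E(I_{k+1}∘⋯∘I_m)], where the bracketing of the symmetrised products I₀∘⋯∘I_k and I_{k+1}∘⋯∘I_m matches the bracketing of the corresponding commutators. -/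
/-- A bracketing (full binary tree) whose leaves are two-sided ideals of `A`. -/
inductive IdealTree (A : Type*) [Ring A] where
  | leaf : TwoSidedIdeal A → IdealTree A
  | node : IdealTree A → IdealTree A → IdealTree A

/-- The symmetrised product of the ideals at the leaves, bracketed as in the tree. -/
def IdealTree.prod {A : Type*} [Ring A] : IdealTree A → TwoSidedIdeal A
  | .leaf I => I
  | .node l r => symmProd l.prod r.prod

/-- The multi-commutator of the subgroups `E(I)` over the leaves, bracketed as
in the tree. -/
def IdealTree.comm {A G : Type*} [Ring A] [Group G]
    (E : TwoSidedIdeal A → Subgroup G) : IdealTree A → Subgroup G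
  | .leaf I => E I
  | .node l r => ⁅l.comm E, r.comm E⁆

lemma bracketed_key {A G : Type*} [Ring A] [Group G]
    (E Gc : TwoSidedIdeal A → Subgroup G)
    (hEG : ∀ I, E I ≤ Gc I)
    (M2 : ∀ I J, ⁅E I, Gc J⁆ = ⁅E I, E J⁆)
    (M3 : ∀ I J K, ⁅⁅E I, Gc J⁆, Gc K⁆ = ⁅⁅E I, E J⁆, E K⁆)
    (M4 : ∀ I J, E (symmProd I J) ≤ ⁅E I, E J⁆ ∧ ⁅E I, E J⁆ ≤ ⁅E I, Gc J⁆ ∧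
      ⁅E I, Gc J⁆ ≤ ⁅Gc I, Gc J⁆ ∧ ⁅Gc I, Gc J⁆ ≤ Gc (symmProd I J))
    (t : IdealTree A) :
    E t.prod ≤ t.comm E ∧ t.comm E ≤ Gc t.prod ∧
      ∀ K, ⁅t.comm E, Gc K⁆ = ⁅E t.prod, Gc K⁆ := by
  induction t with
  | leaf I => exact ⟨le_rfl, hEG I, fun K => rfl⟩
  | node l r ihl ihr =>
    obtain ⟨hl1, hl2, hl3⟩ := ihl
    obtain ⟨hr1, hr2, hr3⟩ := ihr
    set I := l.prod with hI
    set J := r.prod with hJ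
    have hcomm : ⁅l.comm E, r.comm E⁆ = ⁅E I, E J⁆ := by
      apply le_antisymm
      · calc ⁅l.comm E, r.comm E⁆ ≤ ⁅l.comm E, Gc J⁆ :=
              Subgroup.commutator_mono le_rfl hr2
          _ = ⁅E I, Gc J⁆ := hl3 J
          _ = ⁅E I, E J⁆ := M2 I J
      · exact Subgroup.commutator_mono hl1 hr1
    have hnodecomm : (IdealTree.node l r).comm E = ⁅E I, E J⁆ := hcomm
    have hprod : (IdealTree.node l r).prod = symmProd I J := rfl
    have hup : ⁅E I, E J⁆ ≤ Gc (symmProd I J) :=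
      le_trans (le_trans (M4 I J).2.1 (M4 I J).2.2.1) (M4 I J).2.2.2
    refine ⟨?_, ?_, ?_⟩
    · rw [hnodecomm, hprod]; exact (M4 I J).1
    · rw [hnodecomm, hprod]; exact hup
    · intro K
      rw [hnodecomm, hprod]
      have h1 : ⁅⁅E I, E J⁆, Gc K⁆ = ⁅⁅E I, E J⁆, E K⁆ := by
        have h := M3 I J K
        rw [M2 I J] at h
        exact h
      have h2 : ⁅⁅E I, E J⁆, E K⁆ ≤ ⁅E (symmProd I J), Gc K⁆ := by
        calc ⁅⁅E I, E J⁆, E K⁆ ≤ ⁅Gc (symmProd I J), E K⁆ :=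
              Subgroup.commutator_mono hup le_rfl
          _ = ⁅E K, Gc (symmProd I J)⁆ := Subgroup.commutator_comm _ _
          _ = ⁅E K, E (symmProd I J)⁆ := M2 _ _
          _ = ⁅E (symmProd I J), E K⁆ := Subgroup.commutator_comm _ _
          _ = ⁅E (symmProd I J), Gc K⁆ := (M2 _ _).symm
      have h3 : ⁅E (symmProd I J), Gc K⁆ ≤ ⁅⁅E I, E J⁆, Gc K⁆ :=
        Subgroup.commutator_mono (M4 I J).1 le_rfl
      exact le_antisymm (h1 ▸ h2) h3

/-- Under axioms (M1)–(M4), any bracketed multi-commutator of elementary subgroups,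
split at its outermost pair of brackets, equals the double commutator
`[E(I₀∘⋯∘I_k), E(I_{k+1}∘⋯∘I_m)]` with matching bracketings of the symmetrised
products. -/
theorem bracketed_multi_commutator_formula {A G : Type*} [Ring A] [Group G]
    (E Gc : TwoSidedIdeal A → Subgroup G)
    (hEG : ∀ I, E I ≤ Gc I)
    (hnorm : ∀ I, ∀ g ∈ Gc I, ∀ x ∈ E I, g * x * g⁻¹ ∈ E I)
    (M1 : ∀ I J : TwoSidedIdeal A, I ≤ J → E I ≤ E J ∧ Gc I ≤ Gc J)
    (M2 : ∀ I J, ⁅E I, Gc J⁆ = ⁅E I, E J⁆)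
    (M3 : ∀ I J K, ⁅⁅E I, Gc J⁆, Gc K⁆ = ⁅⁅E I, E J⁆, E K⁆)
    (M4 : ∀ I J, E (symmProd I J) ≤ ⁅E I, E J⁆ ∧ ⁅E I, E J⁆ ≤ ⁅E I, Gc J⁆ ∧
      ⁅E I, Gc J⁆ ≤ ⁅Gc I, Gc J⁆ ∧ ⁅Gc I, Gc J⁆ ≤ Gc (symmProd I J))
    (t₁ t₂ : IdealTree A) :
    ⁅t₁.comm E, t₂.comm E⁆ = ⁅E t₁.prod, E t₂.prod⁆ := by
  obtain ⟨h11, h12, h13⟩ := bracketed_key E Gc hEG M2 M3 M4 t₁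
  obtain ⟨h21, h22, h23⟩ := bracketed_key E Gc hEG M2 M3 M4 t₂
  apply le_antisymm
  · calc ⁅t₁.comm E, t₂.comm E⁆ ≤ ⁅t₁.comm E, Gc t₂.prod⁆ :=
          Subgroup.commutator_mono le_rfl h22
      _ = ⁅E t₁.prod, Gc t₂.prod⁆ := h13 _
      _ = ⁅E t₁.prod, E t₂.prod⁆ := M2 _ _
  · exact Subgroup.commutator_mono h11 h21
end
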